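/- arXiv:2206.15029 — 2 statements merged into one kernel-verified Lean document; each statement's English description precedes it below -/
import Mathlib

section
/- For all integers a, b, c, the refined Ehrhart series of the unit 3-cube satisfies, in the power series ring (ℤ[q,q⁻¹])[[t]]: E^{(a,b,c)}_{C_3}(t,q) · (1−t)(1−q^a t)(1−q^b t)(1−q^c t)(1−q^{a+b} t)(1−q^{a+c} t)(1−q^{b+c} t)(1−q^{a+b+c} t) = N(t,q), where N(t,q) = 1 − (3q^{a+b+c} + q^{2a+b+c} + q^{a+2b+c} + q^{a+b+2c} + q^{a+b} + q^{a+c} + q^{b+c}) t² + 2(q^{a+b+c} + q^{2a+b+c} + q^{a+2b+c} + q^{a+b+2c} + q^{2a+2b+c} + q^{2a+b+2c} + q^{a+2b+2c} + q^{2(a+b+c)}) t³ − (q^{2a+2b+c} + q^{2a+b+2c} + q^{a+2b+2c} + 3q^{2(a+b+c)} + q^{3a+2b+2c} + q^{2a+3b+2c} + q^{2a+2b+3c}) t⁴ + q^{3(a+b+c)} t⁶. -/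
/-!
Multiplying the `r`-th coefficient `∏ᵢ (1 + xᵢ + ⋯ + xᵢ ^ r)` of the cube series by `∏ᵢ (1 - xᵢ)`
gives `∏ᵢ (1 - xᵢ ^ (r + 1)) = ∑_{t ⊆ [d]} (-1) ^ #t (xᵗ) ^ (r + 1)`, so `∏ᵢ (1 - xᵢ)` times the
series is a signed sum of geometric series `xᵗ / (1 - xᵗ X)`. Clearing the denominators
`1 - xᵗ X` gives a polynomial identity; to divide it by `∏ᵢ (1 - xᵢ)`, which may be a zero divisor
(e.g. if some weight is `0`), it is proved for the variables of `ℤ[x₀, x₁, x₂]` and then specialized.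
-/

open PowerSeries LaurentPolynomial

/-- The refined Ehrhart series of the unit 3-cube with respect to integer weights `(a,b,c)`:
the coefficient of `t^r` is `∑_{0 ≤ i,j,k ≤ r} q^{ia+jb+kc}`, a Laurent polynomial in `q`. -/
noncomputable def refinedEhrhartCube3 (a b c : ℤ) : PowerSeries (LaurentPolynomial ℤ) :=
  PowerSeries.mk fun r : ℕ =>
    ∑ i ∈ Finset.range (r + 1), ∑ j ∈ Finset.range (r + 1), ∑ k ∈ Finset.range (r + 1),
      T ((i : ℤ) * a + (j : ℤ) * b + (k : ℤ) * c)

open Finset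

namespace PowerSeries

variable {R : Type*} [CommRing R]

theorem mk_pow_mul_one_sub_C_mul_X (u : R) : mk (u ^ ·) * (1 - PowerSeries.C u * X) = 1 := by
  simpa [rescale_X, rescale_mk] using congrArg (rescale u) (mk_one_mul_one_sub_eq_one (S := R))

theorem sum_mul_mk_pow_mul_prod_one_sub {ι : Type*} [DecidableEq ι] (s : Finset ι)
    (c : ι → R⟦X⟧) (u : ι → R) :
    (∑ i ∈ s, c i * mk (u i ^ ·)) * ∏ i ∈ s, (1 - PowerSeries.C (u i) * X) =
      ∑ i ∈ s, c i * ∏ j ∈ s.erase i, (1 - PowerSeries.C (u j) * X) := by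
  rw [sum_mul]
  refine sum_congr rfl fun i hi => ?_
  rw [← mul_prod_erase s _ hi, ← mul_assoc, mul_assoc (c i), mk_pow_mul_one_sub_C_mul_X, mul_one]

end PowerSeries

section Cube

variable {σ R S : Type*} [Fintype σ] [CommRing R] [CommRing S]

/-- The refined Ehrhart series of the unit cube in `ℝ^σ`, with `x i` standing for `q ^ aᵢ`. -/
noncomputable def cubeSeries (x : σ → R) : R⟦X⟧ :=
  mk fun r => ∏ i, ∑ j ∈ range (r + 1), x i ^ j

noncomputable def cubeDenominator (x : σ → R) : R⟦X⟧ :=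
  ∏ t : Finset σ, (1 - PowerSeries.C (∏ i ∈ t, x i) * X)

theorem map_cubeSeries (f : R →+* S) (x : σ → R) :
    map f (cubeSeries x) = cubeSeries (f ∘ x) := by
  ext r
  simp [cubeSeries]

theorem map_cubeDenominator (f : R →+* S) (x : σ → R) :
    map f (cubeDenominator x) = cubeDenominator (f ∘ x) := by
  simp [cubeDenominator]

theorem C_prod_one_sub_mul_cubeSeries [DecidableEq σ] (x : σ → R) :
    PowerSeries.C (∏ i, (1 - x i)) * cubeSeries x =
      ∑ t : Finset σ, PowerSeries.C ((-1) ^ #t * ∏ i ∈ t, x i) * mk ((∏ i ∈ t, x i) ^ ·) := by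
  ext r
  rw [coeff_C_mul, cubeSeries, coeff_mk, ← prod_mul_distrib, map_sum]
  simp_rw [mul_neg_geom_sum, prod_sub, prod_const_one, mul_one, powerset_univ, coeff_C_mul,
    coeff_mk, prod_pow, mul_assoc, pow_succ']

theorem C_prod_one_sub_mul_cubeSeries_mul_cubeDenominator [DecidableEq σ] (x : σ → R) :
    PowerSeries.C (∏ i, (1 - x i)) * cubeSeries x * cubeDenominator x =
      ∑ t : Finset σ, PowerSeries.C ((-1) ^ #t * ∏ i ∈ t, x i) *
        ∏ t' ∈ univ.erase t, (1 - PowerSeries.C (∏ i ∈ t', x i) * X) := by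
  rw [C_prod_one_sub_mul_cubeSeries, cubeDenominator, sum_mul_mk_pow_mul_prod_one_sub]

end Cube

section Cube3

variable {R S : Type*} [CommRing R] [CommRing S]

theorem univ_finset_fin_three :
    (univ : Finset (Finset (Fin 3))) = {∅, {0}, {1}, {2}, {0, 1}, {0, 2}, {1, 2}, {0, 1, 2}} := by
  decide

theorem cubeDenominator_fin_three (x : Fin 3 → R) :
    cubeDenominator x =
      (1 - X) * (1 - PowerSeries.C (x 0) * X) * (1 - PowerSeries.C (x 1) * X) *
        (1 - PowerSeries.C (x 2) * X) * (1 - PowerSeries.C (x 0 * x 1) * X) *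
        (1 - PowerSeries.C (x 0 * x 2) * X) * (1 - PowerSeries.C (x 1 * x 2) * X) *
        (1 - PowerSeries.C (x 0 * x 1 * x 2) * X) := by
  simp (disch := decide) only [cubeDenominator, univ_finset_fin_three, prod_insert,
    prod_singleton, prod_empty, map_one, one_mul, mul_assoc]

noncomputable def cube3Numerator (x y z : R) : R⟦X⟧ :=
  1
  - PowerSeries.C (3 * (x * y * z) + x ^ 2 * y * z + x * y ^ 2 * z + x * y * z ^ 2
      + x * y + x * z + y * z) * X ^ 2
  + PowerSeries.C (2 * (x * y * z + x ^ 2 * y * z + x * y ^ 2 * z + x * y * z ^ 2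
      + x ^ 2 * y ^ 2 * z + x ^ 2 * y * z ^ 2 + x * y ^ 2 * z ^ 2 + (x * y * z) ^ 2)) * X ^ 3
  - PowerSeries.C (x ^ 2 * y ^ 2 * z + x ^ 2 * y * z ^ 2 + x * y ^ 2 * z ^ 2
      + 3 * (x * y * z) ^ 2 + x ^ 3 * y ^ 2 * z ^ 2 + x ^ 2 * y ^ 3 * z ^ 2
      + x ^ 2 * y ^ 2 * z ^ 3) * X ^ 4
  + PowerSeries.C ((x * y * z) ^ 3) * X ^ 6

theorem map_cube3Numerator (f : R →+* S) (x y z : R) :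
    map f (cube3Numerator x y z) = cube3Numerator (f x) (f y) (f z) := by
  simp only [cube3Numerator, map_sub, map_add, map_mul, map_pow, map_one, map_ofNat, map_C, map_X]

theorem cubeSeries_mul_cubeDenominator_fin_three (x : Fin 3 → R) :
    cubeSeries x * cubeDenominator x = cube3Numerator (x 0) (x 1) (x 2) := by
  have universal : cubeSeries (MvPolynomial.X : Fin 3 → MvPolynomial (Fin 3) ℤ) *
      cubeDenominator MvPolynomial.X = cube3Numerator (.X 0) (.X 1) (.X 2) := by
    have hk : (∏ i, (1 - MvPolynomial.X i) : MvPolynomial (Fin 3) ℤ) ≠ 0 := fun h => by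
      simpa using congrArg (MvPolynomial.eval 0) h
    refine mul_left_cancel₀ ((map_ne_zero_iff _ C_injective).mpr hk) ?_
    rw [← mul_assoc, C_prod_one_sub_mul_cubeSeries_mul_cubeDenominator]
    simp (disch := decide) only [univ_finset_fin_three, sum_insert, prod_insert,
      erase_insert_eq_erase, erase_insert_of_ne, erase_eq_of_notMem, sum_singleton, prod_singleton,
      prod_empty, card_insert_of_notMem, card_singleton, card_empty, erase_singleton,
      Fin.prod_univ_three, cube3Numerator, map_sub, map_add, map_mul, map_pow, map_one, map_neg,
      map_ofNat]
    ring
  simpa [map_cubeSeries, map_cubeDenominator, map_cube3Numerator, Function.comp_def] using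
    congrArg (PowerSeries.map (MvPolynomial.aeval x).toRingHom) universal

end Cube3

theorem refinedEhrhartCube3_eq_cubeSeries (a b c : ℤ) :
    refinedEhrhartCube3 a b c = cubeSeries ![T a, T b, T c] := by
  refine PowerSeries.ext fun r => ?_
  simp only [refinedEhrhartCube3, cubeSeries, coeff_mk, Fin.prod_univ_three, Matrix.cons_val_zero,
    Matrix.cons_val_one, Matrix.cons_val_two, Matrix.tail_cons, Matrix.head_cons, T_add, ← T_pow,
    ← sum_mul, ← mul_sum]

/-- For all integers `a, b, c`, the refined Ehrhart series of the unit 3-cube satisfies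
`E^{(a,b,c)}_{C_3}(t,q) · (1−t)(1−qᵃt)(1−qᵇt)(1−qᶜt)(1−q^{a+b}t)(1−q^{a+c}t)(1−q^{b+c}t)(1−q^{a+b+c}t)
 = N(t,q)` with the explicit numerator `N` of Proposition 4. -/
theorem refinedEhrhart_cube3 (a b c : ℤ) :
    refinedEhrhartCube3 a b c *
      ((1 - X) * (1 - (PowerSeries.C : LaurentPolynomial ℤ →+* PowerSeries (LaurentPolynomial ℤ)) (T a) * X) *
       (1 - (PowerSeries.C : LaurentPolynomial ℤ →+* PowerSeries (LaurentPolynomial ℤ)) (T b) * X) *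
       (1 - (PowerSeries.C : LaurentPolynomial ℤ →+* PowerSeries (LaurentPolynomial ℤ)) (T c) * X) *
       (1 - (PowerSeries.C : LaurentPolynomial ℤ →+* PowerSeries (LaurentPolynomial ℤ)) (T (a + b)) * X) *
       (1 - (PowerSeries.C : LaurentPolynomial ℤ →+* PowerSeries (LaurentPolynomial ℤ)) (T (a + c)) * X) *
       (1 - (PowerSeries.C : LaurentPolynomial ℤ →+* PowerSeries (LaurentPolynomial ℤ)) (T (b + c)) * X) *
       (1 - (PowerSeries.C : LaurentPolynomial ℤ →+* PowerSeries (LaurentPolynomial ℤ)) (T (a + b + c)) * X)) =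
    1
    - (PowerSeries.C : LaurentPolynomial ℤ →+* PowerSeries (LaurentPolynomial ℤ))
        (3 * T (a + b + c) + T (2 * a + b + c) + T (a + 2 * b + c) + T (a + b + 2 * c)
          + T (a + b) + T (a + c) + T (b + c)) * X ^ 2
    + (PowerSeries.C : LaurentPolynomial ℤ →+* PowerSeries (LaurentPolynomial ℤ))
        (2 * (T (a + b + c) + T (2 * a + b + c) + T (a + 2 * b + c) + T (a + b + 2 * c)
          + T (2 * a + 2 * b + c) + T (2 * a + b + 2 * c) + T (a + 2 * b + 2 * c)
          + T (2 * (a + b + c)))) * X ^ 3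
    - (PowerSeries.C : LaurentPolynomial ℤ →+* PowerSeries (LaurentPolynomial ℤ))
        (T (2 * a + 2 * b + c) + T (2 * a + b + 2 * c) + T (a + 2 * b + 2 * c)
          + 3 * T (2 * (a + b + c)) + T (3 * a + 2 * b + 2 * c) + T (2 * a + 3 * b + 2 * c)
          + T (2 * a + 2 * b + 3 * c)) * X ^ 4
    + (PowerSeries.C : LaurentPolynomial ℤ →+* PowerSeries (LaurentPolynomial ℤ)) (T (3 * (a + b + c))) * X ^ 6 := by
  have T_two_mul (m : ℤ) : (T (2 * m) : LaurentPolynomial ℤ) = T m ^ 2 := by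
    rw [T_pow]; norm_num
  have T_three_mul (m : ℤ) : (T (3 * m) : LaurentPolynomial ℤ) = T m ^ 3 := by
    rw [T_pow]; norm_num
  have h := cubeSeries_mul_cubeDenominator_fin_three ![(T a : LaurentPolynomial ℤ), T b, T c]
  rw [← refinedEhrhartCube3_eq_cubeSeries, cubeDenominator_fin_three, cube3Numerator] at h
  simp only [Matrix.cons_val_zero, Matrix.cons_val_one, Matrix.cons_val_two, Matrix.tail_cons,
    Matrix.head_cons] at h
  simpa only [T_add, T_two_mul, T_three_mul] using h
end

section
/- The refined Ehrhart series of the unit 3-cube for the symmetric weight vector (1,1,1) satisfies, in the power series ring ℤ[q][[t]]: E^{(1,1,1)}_{C_3}(t,q) · (1−t)(1−qt)(1−q²t)(1−q³t) = 1 + 2q(1+q)t + q³t². -/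
/-!
Each coefficient of the series is `(1 + q + ⋯ + q^r)^3`, so after multiplying by `(1 - q)^3` it
becomes `(1 - q^{r+1})^3 = 1 - 3q·q^r + 3q²·(q²)^r - q³·(q³)^r`. Thus `(1 - q)^3 · E` is a
combination of the geometric series `1/(1 - q^k t)`, `k = 0, …, 3`; clearing their denominators and
cancelling the nonzero constant `(1 - q)^3` in the domain `ℤ[q][[t]]` gives the identity.
-/

/-- The refined Ehrhart series of the unit 3-cube for the symmetric weight vector `(1,1,1)`:
the coefficient of `t^r` is `∑_{0 ≤ i,j,k ≤ r} q^{i+j+k} ∈ ℤ[q]`. -/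
noncomputable def refinedEhrhartCube3Sym : PowerSeries (Polynomial ℤ) :=
  PowerSeries.mk fun r : ℕ =>
    ∑ i ∈ Finset.range (r + 1), ∑ j ∈ Finset.range (r + 1), ∑ k ∈ Finset.range (r + 1),
      (Polynomial.X : Polynomial ℤ) ^ (i + j + k)

open Finset PowerSeries

theorem PowerSeries.mk_pow_mul_one_sub_C_mul_X_s9 {R : Type*} [CommRing R] (c : R) :
    (mk fun n => c ^ n) * (1 - C c * X) = 1 := by
  simpa [rescale_mk, rescale_X] using congrArg (rescale c) (mk_one_mul_one_sub_eq_one R)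

theorem Finset.sum_sum_sum_pow_add_add {R : Type*} [CommSemiring R] (x : R) (s : Finset ℕ) :
    ∑ i ∈ s, ∑ j ∈ s, ∑ k ∈ s, x ^ (i + j + k) = (∑ i ∈ s, x ^ i) ^ 3 := by
  simp only [pow_add, ← mul_sum, ← sum_mul]
  ring

theorem coeff_refinedEhrhartCube3Sym_mul_C_one_sub_X_pow_three (r : ℕ) :
    coeff r (refinedEhrhartCube3Sym * C ((1 - Polynomial.X) ^ 3)) =
      (1 - Polynomial.X ^ (r + 1)) ^ 3 := by
  rw [coeff_mul_C, refinedEhrhartCube3Sym, coeff_mk, sum_sum_sum_pow_add_add, ← mul_pow,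
    mul_comm, mul_neg_geom_sum]

theorem refinedEhrhartCube3Sym_mul_C_one_sub_X_pow_three :
    refinedEhrhartCube3Sym * C ((1 - Polynomial.X) ^ 3) =
      mk (fun n => 1 ^ n) - C (3 * Polynomial.X) * mk (fun n => Polynomial.X ^ n)
        + C (3 * Polynomial.X ^ 2) * mk (fun n => (Polynomial.X ^ 2) ^ n)
        - C (Polynomial.X ^ 3) * mk (fun n => (Polynomial.X ^ 3) ^ n) := by
  ext r : 1
  simp only [coeff_refinedEhrhartCube3Sym_mul_C_one_sub_X_pow_three, map_sub, map_add,
    coeff_C_mul, coeff_mk]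
  ring

/-- The refined Ehrhart series of the unit 3-cube for the weight vector `(1,1,1)` satisfies
`E^{(1,1,1)}_{C_3}(t,q) · (1−t)(1−qt)(1−q²t)(1−q³t) = 1 + 2q(1+q)t + q³t²` in `ℤ[q][[t]]`. -/
theorem refinedEhrhart_cube3_symmetric :
    refinedEhrhartCube3Sym *
      ((1 - PowerSeries.X) *
       (1 - (PowerSeries.C : Polynomial ℤ →+* PowerSeries (Polynomial ℤ)) Polynomial.X * PowerSeries.X) *
       (1 - (PowerSeries.C : Polynomial ℤ →+* PowerSeries (Polynomial ℤ)) (Polynomial.X ^ 2) * PowerSeries.X) *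
       (1 - (PowerSeries.C : Polynomial ℤ →+* PowerSeries (Polynomial ℤ)) (Polynomial.X ^ 3) * PowerSeries.X)) =
    1 + (PowerSeries.C : Polynomial ℤ →+* PowerSeries (Polynomial ℤ)) (2 * Polynomial.X * (1 + Polynomial.X)) * PowerSeries.X
      + (PowerSeries.C : Polynomial ℤ →+* PowerSeries (Polynomial ℤ)) (Polynomial.X ^ 3) * PowerSeries.X ^ 2 := by
  have hne : C ((1 - Polynomial.X : Polynomial ℤ) ^ 3) ≠ 0 :=
    (map_ne_zero_iff _ C_injective).mpr (pow_ne_zero 3 (sub_ne_zero.mpr (Polynomial.X_ne_C 1).symm))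
  apply mul_right_cancel₀ hne
  rw [mul_right_comm, refinedEhrhartCube3Sym_mul_C_one_sub_X_pow_three]
  have geom₀ := mk_pow_mul_one_sub_C_mul_X_s9 (1 : Polynomial ℤ)
  have geom₁ := mk_pow_mul_one_sub_C_mul_X_s9 (Polynomial.X : Polynomial ℤ)
  have geom₂ := mk_pow_mul_one_sub_C_mul_X_s9 (Polynomial.X ^ 2 : Polynomial ℤ)
  have geom₃ := mk_pow_mul_one_sub_C_mul_X_s9 (Polynomial.X ^ 3 : Polynomial ℤ)
  simp only [map_mul, map_pow, map_sub, map_add, map_one, map_ofNat] at geom₀ geom₁ geom₂ geom₃ ⊢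
  set q := C (Polynomial.X : Polynomial ℤ)
  linear_combination
    ((1 - q * X) * (1 - q ^ 2 * X) * (1 - q ^ 3 * X)) * geom₀
    - 3 * q * ((1 - X) * (1 - q ^ 2 * X) * (1 - q ^ 3 * X)) * geom₁
    + 3 * q ^ 2 * ((1 - X) * (1 - q * X) * (1 - q ^ 3 * X)) * geom₂
    - q ^ 3 * ((1 - X) * (1 - q * X) * (1 - q ^ 2 * X)) * geom₃
end
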